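/- arXiv:1412.7426 — 2 statements merged into one kernel-verified Lean document; each statement's English description precedes it below -/
import Mathlib

section
/- (Energy differential inequality for the linearized Burgers equation.) There exists a constant c > 0 with the following property. Let T > 0, let X : [0,T] × [0,1] → ℝ be continuous with continuous partial derivative ∂_ξ X, and let η : [0,T] × [0,1] → ℝ be continuous with continuous partial derivatives ∂_t η, ∂_ξ η, ∂_ξ² η, satisfying η(t,0) = η(t,1) = 0 for all t ∈ [0,T] and the equation ∂_t η(t,ξ) = ∂_ξ² η(t,ξ) + 2 ∂_ξ( X(t,ξ) η(t,ξ) ) for all (t,ξ) ∈ [0,T] × [0,1]. Then for every t ∈ [0,T]: (d/dt) ‖η(t,·)‖_{L²}² ≤ - ‖∂_ξ η(t,·)‖_{L²}² + c ‖X(t,·)‖_{L⁴}^{8/3} ‖η(t,·)‖_{L²}². -/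
/-
Differentiating under the integral sign and integrating by parts (the Dirichlet conditions kill the
boundary terms) gives `d/dt ‖η‖₂² = -2 ‖η_ξ‖₂² - 4 ∫ X η η_ξ`. Since `η(ξ)² = ∫₀^ξ 2 η η_ξ`, one has
the one-dimensional Ladyzhenskaya inequality `‖η‖₄⁴ ≤ 2 ‖η‖₂³ ‖η_ξ‖₂`; with Cauchy–Schwarz twice it
bounds the cross term by `|∫ X η η_ξ| ≤ 4^{1/8} ‖X‖₄ ‖η‖₂^{3/4} ‖η_ξ‖₂^{5/4}`, and Young's inequality
with exponents `8/5` and `8/3` absorbs the `‖η_ξ‖₂` factor into `‖η_ξ‖₂²`, leaving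
`24 ‖X‖₄^{8/3} ‖η‖₂²`.
-/

open MeasureTheory Set intervalIntegral

theorem sq_integral_mul_le_integral_sq_mul_integral_sq {α : Type*} [MeasurableSpace α]
    {μ : Measure α} {f g : α → ℝ} (hf : Integrable (fun x => f x ^ 2) μ)
    (hg : Integrable (fun x => g x ^ 2) μ) (hfg : Integrable (fun x => f x * g x) μ) :
    (∫ x, f x * g x ∂μ) ^ 2 ≤ (∫ x, f x ^ 2 ∂μ) * ∫ x, g x ^ 2 ∂μ := by
  have hquad : ∀ s : ℝ, 0 ≤ (∫ x, f x ^ 2 ∂μ) * (s * s) + 2 * (∫ x, f x * g x ∂μ) * s +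
      ∫ x, g x ^ 2 ∂μ := fun s =>
    calc 0 ≤ ∫ x, (s * f x + g x) ^ 2 ∂μ := integral_nonneg fun x => sq_nonneg _
      _ = ∫ x, (s * s * f x ^ 2 + 2 * s * (f x * g x) + g x ^ 2) ∂μ :=
          integral_congr_ae (ae_of_all _ fun x => by ring)
      _ = _ := by
          rw [integral_add ((hf.const_mul _).fun_add (hfg.const_mul _)) hg,
            integral_add (hf.const_mul _) (hfg.const_mul _), MeasureTheory.integral_const_mul,
            MeasureTheory.integral_const_mul]
          ring
  have := discrim_le_zero hquad
  rw [discrim] at this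
  linarith

/-- Young's inequality with exponents `8/5` and `8/3`. -/
theorem four_mul_abs_le_of_pow_eight_le {A E G I : ℝ} (hA : 0 ≤ A) (hE : 0 ≤ E) (hG : 0 ≤ G)
    (h : I ^ 8 ≤ 4 * A ^ 2 * E ^ 3 * G ^ 5) : 4 * |I| ≤ G + 24 * A ^ ((2:ℝ) / 3) * E := by
  set B := 64 * A ^ ((2:ℝ) / 3) * E
  have hB : 0 ≤ B := by positivity
  have hB3 : B ^ 3 = 64 ^ 3 * A ^ 2 * E ^ 3 := by
    rw [mul_pow, mul_pow, ← Real.rpow_mul_natCast hA]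
    norm_num
  have hmean : G ^ ((5:ℝ) / 8) * B ^ ((3:ℝ) / 8) ≤ 5 / 8 * G + 3 / 8 * B :=
    Real.geom_mean_le_arith_mean2_weighted (by norm_num) (by norm_num) hG hB (by norm_num)
  have hI : 4 * |I| ≤ G ^ ((5:ℝ) / 8) * B ^ ((3:ℝ) / 8) := by
    refine (pow_le_pow_iff_left₀ (by positivity) (by positivity) (by norm_num : 8 ≠ 0)).1 ?_
    rw [mul_pow, mul_pow, ← Real.rpow_mul_natCast hG, ← Real.rpow_mul_natCast hB, pow_abs,
      abs_of_nonneg (Even.pow_nonneg (by decide) I)]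
    norm_num [hB3]
    nlinarith [pow_nonneg hG 5]
  linarith

open Function in
theorem hasDerivWithinAt_integral_of_continuousOn_uncurry {a b c d t : ℝ} (hcd : c ≤ d)
    {f f' : ℝ → ℝ → ℝ} (hf : ∀ s ∈ Icc a b, ContinuousOn (f s) (Icc c d))
    (hf' : ContinuousOn (uncurry f') (Icc a b ×ˢ Icc c d))
    (hderiv : ∀ s ∈ Icc a b, ∀ x ∈ Icc c d, HasDerivWithinAt (f · x) (f' s x) (Icc a b) s)
    (ht : t ∈ Icc a b) :
    HasDerivWithinAt (fun s => ∫ x in c..d, f s x) (∫ x in c..d, f' t x) (Icc a b) t := by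
  rw [hasDerivWithinAt_iff_isLittleO, Asymptotics.isLittleO_iff]
  intro ε hε
  have hε' : 0 < ε / (d - c + 1) := div_pos hε (by linarith)
  obtain ⟨δ, hδ, hclose⟩ := Metric.uniformContinuousOn_iff.1
    ((isCompact_Icc.prod isCompact_Icc).uniformContinuousOn_of_continuous hf') _ hε'
  set S := Icc a b ∩ Metric.ball t δ
  have htS : t ∈ S := ⟨ht, Metric.mem_ball_self hδ⟩
  filter_upwards [inter_mem_nhdsWithin (Icc a b) (Metric.ball_mem_nhds t hδ)] with s hs
  -- mean value theorem for `τ ↦ f τ x - τ f' t x` on the convex set `S`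
  have hpoint : ∀ x ∈ Icc c d,
      ‖f s x - f t x - (s - t) * f' t x‖ ≤ ε / (d - c + 1) * ‖s - t‖ := by
    intro x hx
    have hτ : ∀ τ ∈ S, ‖f' τ x - 1 * f' t x‖ ≤ ε / (d - c + 1) := fun τ hτ => by
      rw [one_mul, ← dist_eq_norm]
      refine (hclose (τ, x) ⟨hτ.1, hx⟩ (t, x) ⟨ht, hx⟩ ?_).le
      simpa [Prod.dist_eq, hδ.le] using hτ.2
    have hmvt := Convex.norm_image_sub_le_of_norm_hasDerivWithin_le
      (fun τ hτ => ((hderiv τ hτ.1 x hx).mono inter_subset_left).fun_sub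
        ((hasDerivWithinAt_id τ S).mul_const (f' t x))) hτ
      ((convex_Icc a b).inter (convex_ball t δ)) htS hs
    rwa [show f s x - f t x - (s - t) * f' t x = f s x - id s * f' t x - (f t x - id t * f' t x)
      by simp only [id]; ring]
  have hint : ∀ s ∈ Icc a b, IntervalIntegrable (f s) volume c d :=
    fun s hs => (hf s hs).intervalIntegrable_of_Icc hcd
  rw [smul_eq_mul, ← intervalIntegral.integral_sub (hint s hs.1) (hint t ht),
    ← intervalIntegral.integral_const_mul, ← intervalIntegral.integral_sub
      ((hint s hs.1).sub (hint t ht))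
      (((hf'.uncurry_left t ht).intervalIntegrable_of_Icc hcd).const_mul _)]
  calc ‖∫ x in c..d, (f s x - f t x - (s - t) * f' t x)‖
      ≤ ε / (d - c + 1) * ‖s - t‖ * |d - c| := norm_integral_le_of_norm_le_const fun x hx =>
        hpoint x (by rw [uIoc_of_le hcd] at hx; exact Ioc_subset_Icc_self hx)
    _ = ε * ‖s - t‖ * ((d - c) / (d - c + 1)) := by
        rw [abs_of_nonneg (sub_nonneg.2 hcd)]
        ring
    _ ≤ ε * ‖s - t‖ :=
        mul_le_of_le_one_right (by positivity) ((div_le_one (by linarith)).2 (by linarith))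

section

variable {a b : ℝ} {u u' : ℝ → ℝ}

theorem intervalIntegral.sq_integral_mul_le_of_continuousOn (hab : a ≤ b)
    {f g : ℝ → ℝ} (hf : ContinuousOn f (Icc a b)) (hg : ContinuousOn g (Icc a b)) :
    (∫ x in a..b, f x * g x) ^ 2 ≤ (∫ x in a..b, f x ^ 2) * ∫ x in a..b, g x ^ 2 := by
  have hint : ∀ {h : ℝ → ℝ}, ContinuousOn h (Icc a b) →
      Integrable h (volume.restrict (Ioc a b)) :=
    fun hh => hh.integrableOn_Icc.mono_set Ioc_subset_Icc_self
  simp only [integral_of_le hab]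
  exact sq_integral_mul_le_integral_sq_mul_integral_sq (hint (hf.pow 2)) (hint (hg.pow 2))
    (hint (hf.mul hg))

theorem intervalIntegral.integral_eq_sub_of_hasDerivWithinAt_of_le (hab : a ≤ b) {f f' : ℝ → ℝ}
    (hf : ∀ x ∈ Icc a b, HasDerivWithinAt f (f' x) (Icc a b) x)
    (hf' : ContinuousOn f' (Icc a b)) : ∫ x in a..b, f' x = f b - f a :=
  integral_eq_sub_of_hasDerivAt_of_le hab (fun x hx => (hf x hx).continuousWithinAt)
    (fun x hx => (hf x (Ioo_subset_Icc_self hx)).hasDerivAt (Icc_mem_nhds hx.1 hx.2))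
    (hf'.intervalIntegrable_of_Icc hab)

theorem sq_le_two_mul_integral_abs_mul_abs_deriv
    (hu : ∀ x ∈ Icc a b, HasDerivWithinAt u (u' x) (Icc a b) x) (hu' : ContinuousOn u' (Icc a b))
    (ha : u a = 0) {x : ℝ} (hx : x ∈ Icc a b) :
    u x ^ 2 ≤ 2 * ∫ y in a..b, |u y| * |u' y| := by
  have hsub : Icc a x ⊆ Icc a b := Icc_subset_Icc_right hx.2
  have hcont : ContinuousOn (fun y => 2 * u y * u' y) (Icc a b) :=
    (continuousOn_const.mul fun y hy => (hu y hy).continuousWithinAt).mul hu'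
  have hftc : ∫ y in a..x, 2 * u y * u' y = u x ^ 2 := by
    rw [integral_eq_sub_of_hasDerivWithinAt_of_le hx.1 (f := fun y => u y ^ 2)
      (fun y hy => by simpa using ((hu y (hsub hy)).mono hsub).fun_pow 2) (hcont.mono hsub), ha]
    ring
  calc u x ^ 2 = ∫ y in a..x, 2 * u y * u' y := hftc.symm
    _ ≤ ∫ y in a..x, |2 * u y * u' y| := (le_abs_self _).trans (abs_integral_le_integral_abs hx.1)
    _ ≤ ∫ y in a..b, |2 * u y * u' y| :=
        integral_mono_interval le_rfl hx.1 hx.2 (ae_of_all _ fun _ => abs_nonneg _)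
          (hcont.abs.intervalIntegrable_of_Icc (hx.1.trans hx.2))
    _ = 2 * ∫ y in a..b, |u y| * |u' y| := by
        simp only [abs_mul, abs_two, mul_assoc, intervalIntegral.integral_const_mul]

/-- One-dimensional Ladyzhenskaya inequality: `‖u‖₄⁴ ≤ 2 ‖u‖₂³ ‖u'‖₂`. -/
theorem sq_integral_pow_four_le (hab : a ≤ b)
    (hu : ∀ x ∈ Icc a b, HasDerivWithinAt u (u' x) (Icc a b) x) (hu' : ContinuousOn u' (Icc a b))
    (ha : u a = 0) :
    (∫ x in a..b, u x ^ 4) ^ 2 ≤ 4 * (∫ x in a..b, u x ^ 2) ^ 3 * ∫ x in a..b, u' x ^ 2 := by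
  have huc : ContinuousOn u (Icc a b) := fun x hx => (hu x hx).continuousWithinAt
  set J := ∫ x in a..b, |u x| * |u' x|
  set E := ∫ x in a..b, u x ^ 2
  have hQ : ∫ x in a..b, u x ^ 4 ≤ 2 * J * E := by
    rw [← intervalIntegral.integral_const_mul]
    refine integral_mono_on hab ((huc.pow 4).intervalIntegrable_of_Icc hab)
      ((continuousOn_const.mul (huc.pow 2)).intervalIntegrable_of_Icc hab) fun x hx => ?_
    calc u x ^ 4 = u x ^ 2 * u x ^ 2 := by ring
      _ ≤ 2 * J * u x ^ 2 := by
          gcongr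
          exact sq_le_two_mul_integral_abs_mul_abs_deriv hu hu' ha hx
  have hJ : J ^ 2 ≤ E * ∫ x in a..b, u' x ^ 2 := by
    simpa only [sq_abs] using sq_integral_mul_le_of_continuousOn hab huc.abs hu'.abs
  have hQ0 : 0 ≤ ∫ x in a..b, u x ^ 4 := integral_nonneg hab fun x _ => by positivity
  have hE0 : 0 ≤ E := integral_nonneg hab fun x _ => by positivity
  calc (∫ x in a..b, u x ^ 4) ^ 2 ≤ (2 * J * E) ^ 2 := pow_le_pow_left₀ hQ0 hQ 2
    _ = 4 * E ^ 2 * J ^ 2 := by ring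
    _ ≤ 4 * E ^ 2 * (E * ∫ x in a..b, u' x ^ 2) := by gcongr
    _ = _ := by ring

theorem pow_eight_integral_mul_mul_deriv_le (hab : a ≤ b)
    (hu : ∀ x ∈ Icc a b, HasDerivWithinAt u (u' x) (Icc a b) x) (hu' : ContinuousOn u' (Icc a b))
    (ha : u a = 0) {v : ℝ → ℝ} (hv : ContinuousOn v (Icc a b)) :
    (∫ x in a..b, v x * u x * u' x) ^ 8 ≤ 4 * (∫ x in a..b, v x ^ 4) ^ 2 *
      (∫ x in a..b, u x ^ 2) ^ 3 * (∫ x in a..b, u' x ^ 2) ^ 5 := by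
  have huc : ContinuousOn u (Icc a b) := fun x hx => (hu x hx).continuousWithinAt
  set P := ∫ x in a..b, (v x * u x) ^ 2
  set A := ∫ x in a..b, v x ^ 4
  set Q := ∫ x in a..b, u x ^ 4
  set G := ∫ x in a..b, u' x ^ 2
  have hI : (∫ x in a..b, v x * u x * u' x) ^ 2 ≤ P * G :=
    sq_integral_mul_le_of_continuousOn hab (hv.mul huc) hu'
  have hP : P ^ 2 ≤ A * Q := by
    have := sq_integral_mul_le_of_continuousOn hab (f := fun x => v x ^ 2)
      (g := fun x => u x ^ 2) (hv.pow 2) (huc.pow 2)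
    simpa only [← mul_pow, ← pow_mul] using this
  have hQ := sq_integral_pow_four_le hab hu hu' ha
  have hP0 : 0 ≤ P := integral_nonneg hab fun x _ => by positivity
  have hA0 : 0 ≤ A := integral_nonneg hab fun x _ => by positivity
  have hG0 : 0 ≤ G := integral_nonneg hab fun x _ => by positivity
  calc (∫ x in a..b, v x * u x * u' x) ^ 8 = ((∫ x in a..b, v x * u x * u' x) ^ 2) ^ 4 := by ring
    _ ≤ (P * G) ^ 4 := by gcongr
    _ = (P ^ 2) ^ 2 * G ^ 4 := by ring
    _ ≤ (A * Q) ^ 2 * G ^ 4 := by gcongr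
    _ = A ^ 2 * Q ^ 2 * G ^ 4 := by ring
    _ ≤ A ^ 2 * (4 * (∫ x in a..b, u x ^ 2) ^ 3 * G) * G ^ 4 := by gcongr
    _ = _ := by ring

theorem four_mul_abs_integral_mul_mul_deriv_le (hab : a ≤ b) {v : ℝ → ℝ}
    (hu : ∀ x ∈ Icc a b, HasDerivWithinAt u (u' x) (Icc a b) x) (hu' : ContinuousOn u' (Icc a b))
    (ha : u a = 0) (hv : ContinuousOn v (Icc a b)) :
    4 * |∫ x in a..b, v x * u x * u' x| ≤
      (∫ x in a..b, u' x ^ 2) + 24 * (∫ x in a..b, v x ^ 4) ^ ((2:ℝ) / 3) *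
        ∫ x in a..b, u x ^ 2 :=
  four_mul_abs_le_of_pow_eight_le (integral_nonneg hab fun x _ => by positivity)
    (integral_nonneg hab fun x _ => by positivity) (integral_nonneg hab fun x _ => by positivity)
    (pow_eight_integral_mul_mul_deriv_le hab hu hu' ha hv)

theorem linearizedBurgers_energy_identity (hab : a ≤ b) {u'' v v' w : ℝ → ℝ}
    (hu : ∀ x ∈ Icc a b, HasDerivWithinAt u (u' x) (Icc a b) x)
    (hu' : ∀ x ∈ Icc a b, HasDerivWithinAt u' (u'' x) (Icc a b) x)
    (hv : ∀ x ∈ Icc a b, HasDerivWithinAt v (v' x) (Icc a b) x)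
    (hu''c : ContinuousOn u'' (Icc a b)) (hv'c : ContinuousOn v' (Icc a b))
    (ha : u a = 0) (hb : u b = 0)
    (hw : ∀ x ∈ Icc a b, w x = u'' x + 2 * (v' x * u x + v x * u' x)) :
    ∫ x in a..b, 2 * u x * w x =
      -2 * (∫ x in a..b, u' x ^ 2) - 4 * ∫ x in a..b, v x * u x * u' x := by
  have huc : ContinuousOn u (Icc a b) := fun x hx => (hu x hx).continuousWithinAt
  have hu'c : ContinuousOn u' (Icc a b) := fun x hx => (hu' x hx).continuousWithinAt
  have hvc : ContinuousOn v (Icc a b) := fun x hx => (hv x hx).continuousWithinAt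
  have hwc : ContinuousOn w (Icc a b) :=
    (hu''c.add (continuousOn_const.mul ((hv'c.mul huc).add (hvc.mul hu'c)))).congr hw
  -- the flux `2 u u' + 4 v u²` vanishes at both ends
  have hflux : ∫ x in a..b, (2 * u x * w x + (2 * u' x ^ 2 + 4 * (v x * u x * u' x))) = 0 := by
    rw [integral_eq_sub_of_hasDerivWithinAt_of_le hab
      (f := fun x => 2 * (u x * u' x) + 4 * (v x * u x ^ 2)) (fun x hx => ?_) (by fun_prop)]
    · simp [ha, hb]
    refine (((hu x hx).mul (hu' x hx)).const_mul 2 |>.add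
      (((hv x hx).mul ((hu x hx).fun_pow 2)).const_mul 4)).congr_deriv ?_
    rw [hw x hx]
    ring
  rw [intervalIntegral.integral_add, intervalIntegral.integral_add,
    intervalIntegral.integral_const_mul, intervalIntegral.integral_const_mul] at hflux
  · linarith
  all_goals exact ContinuousOn.intervalIntegrable_of_Icc hab (by fun_prop)

end

/-- **Energy differential inequality for the linearized Burgers equation.**
If `η` is a classical solution of `∂_t η = ∂_ξ² η + 2 ∂_ξ(X η)` on
`[0,T] × [0,1]` with Dirichlet boundary conditions, then
`(d/dt) ‖η(t,·)‖_{L²}² ≤ -‖∂_ξ η(t,·)‖_{L²}² + c ‖X(t,·)‖_{L⁴}^{8/3} ‖η(t,·)‖_{L²}²`. -/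
theorem energy_differential_inequality :
    ∃ c : ℝ, 0 < c ∧
      ∀ (T : ℝ), 0 < T →
      ∀ (X Xξ η ηt ηξ ηξξ : ℝ → ℝ → ℝ),
        ContinuousOn (fun p : ℝ × ℝ => X p.1 p.2) (Icc (0:ℝ) T ×ˢ Icc (0:ℝ) 1) →
        ContinuousOn (fun p : ℝ × ℝ => Xξ p.1 p.2) (Icc (0:ℝ) T ×ˢ Icc (0:ℝ) 1) →
        ContinuousOn (fun p : ℝ × ℝ => η p.1 p.2) (Icc (0:ℝ) T ×ˢ Icc (0:ℝ) 1) →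
        ContinuousOn (fun p : ℝ × ℝ => ηt p.1 p.2) (Icc (0:ℝ) T ×ˢ Icc (0:ℝ) 1) →
        ContinuousOn (fun p : ℝ × ℝ => ηξ p.1 p.2) (Icc (0:ℝ) T ×ˢ Icc (0:ℝ) 1) →
        ContinuousOn (fun p : ℝ × ℝ => ηξξ p.1 p.2) (Icc (0:ℝ) T ×ˢ Icc (0:ℝ) 1) →
        (∀ t ∈ Icc (0:ℝ) T, ∀ ξ ∈ Icc (0:ℝ) 1,
          HasDerivWithinAt (fun x => X t x) (Xξ t ξ) (Icc (0:ℝ) 1) ξ) →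
        (∀ t ∈ Icc (0:ℝ) T, ∀ ξ ∈ Icc (0:ℝ) 1,
          HasDerivWithinAt (fun s => η s ξ) (ηt t ξ) (Icc (0:ℝ) T) t) →
        (∀ t ∈ Icc (0:ℝ) T, ∀ ξ ∈ Icc (0:ℝ) 1,
          HasDerivWithinAt (fun x => η t x) (ηξ t ξ) (Icc (0:ℝ) 1) ξ) →
        (∀ t ∈ Icc (0:ℝ) T, ∀ ξ ∈ Icc (0:ℝ) 1,
          HasDerivWithinAt (fun x => ηξ t x) (ηξξ t ξ) (Icc (0:ℝ) 1) ξ) →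
        (∀ t ∈ Icc (0:ℝ) T, η t 0 = 0 ∧ η t 1 = 0) →
        (∀ t ∈ Icc (0:ℝ) T, ∀ ξ ∈ Icc (0:ℝ) 1,
          ηt t ξ = ηξξ t ξ + 2 * (Xξ t ξ * η t ξ + X t ξ * ηξ t ξ)) →
        ∀ t ∈ Icc (0:ℝ) T, ∃ D : ℝ,
          HasDerivWithinAt (fun s => ∫ x in (0:ℝ)..1, η s x ^ 2) D (Icc (0:ℝ) T) t ∧
          D ≤ -(∫ x in (0:ℝ)..1, ηξ t x ^ 2) +
                c * (∫ x in (0:ℝ)..1, X t x ^ 4) ^ ((2:ℝ)/3) *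
                  (∫ x in (0:ℝ)..1, η t x ^ 2) := by
  refine ⟨24, by norm_num, fun T _ X Xξ η ηt ηξ ηξξ hX hXξ hη hηt _ hηξξ hXdξ hηdt hηdξ hηξdξ
    hbc hpde t ht => ⟨∫ x in (0:ℝ)..1, 2 * η t x * ηt t x, ?_, ?_⟩⟩
  · exact hasDerivWithinAt_integral_of_continuousOn_uncurry zero_le_one
      (f' := fun s x => 2 * η s x * ηt s x) (fun s hs => (hη.uncurry_left s hs).pow 2)
      ((continuousOn_const.mul hη).mul hηt)
      (fun s hs x hx => by simpa using (hηdt s hs x hx).fun_pow 2) ht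
  · rw [linearizedBurgers_energy_identity zero_le_one (hηdξ t ht) (hηξdξ t ht) (hXdξ t ht)
      (hηξξ.uncurry_left t ht) (hXξ.uncurry_left t ht) (hbc t ht).1 (hbc t ht).2 (hpde t ht)]
    have hcross := four_mul_abs_integral_mul_mul_deriv_le zero_le_one (hηdξ t ht)
      (fun x hx => (hηξdξ t ht x hx).continuousWithinAt) (hbc t ht).1 (hX.uncurry_left t ht)
    linarith [neg_abs_le (∫ x in (0:ℝ)..1, X t x * η t x * ηξ t x)]
end

section
/- (Abstract form of Proposition 2.3 of the paper: existence of the logarithmic derivative / integration by parts density.) Let H be a real separable Hilbert space, let ν be a Borel probability measure on H, let h ∈ H and C ≥ 0. Assume that for every φ ∈ C¹_b(H) one has |∫_H ⟨Dφ(x), h⟩ ν(dx)| ≤ C ‖φ‖_{L²(ν)}. Then there exists v ∈ L²(H,ν) with ‖v‖_{L²(ν)} ≤ C such that for every φ ∈ C¹_b(H): ∫_H ⟨Dφ(x), h⟩ ν(dx) = ∫_H φ(x) v(x) ν(dx). -/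
/-!
The map `φ ↦ ∫ ⟪Dφ, h⟫ dν` is linear on `C¹_b(H)` and, by hypothesis, bounded by `C` times the
`L²(ν)`-norm of `φ`. In particular it vanishes on functions that are `0` ν-a.e., so it descends to a
functional of norm at most `C` on the image of `C¹_b(H)` in `L²(ν)`. Hahn–Banach extends it to all
of `L²(ν)` without increasing the norm, and the Riesz representation theorem writes the extension
as `⟪v, ·⟫` with `‖v‖ ≤ C`.
-/

open MeasureTheory
open scoped RealInnerProductSpace

/-- `φ : H → ℝ` is of class `C¹_b` with gradient `Dφ : H → H`: `φ` is bounded,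
Fréchet differentiable with gradient `Dφ`, and `Dφ` is bounded and continuous. -/
def IsC1b {H : Type*} [NormedAddCommGroup H] [InnerProductSpace ℝ H] [CompleteSpace H]
    (φ : H → ℝ) (Dφ : H → H) : Prop :=
  (∃ M : ℝ, ∀ x, |φ x| ≤ M) ∧ (∀ x, HasGradientAt φ (Dφ x) x) ∧
    Continuous Dφ ∧ (∃ M : ℝ, ∀ x, ‖Dφ x‖ ≤ M)

section Gradient

variable {𝕜 F : Type*} [RCLike 𝕜] [NormedAddCommGroup F] [InnerProductSpace 𝕜 F]
  [CompleteSpace F] {f g : F → 𝕜} {f' g' x : F}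

theorem HasGradientAt.add (hf : HasGradientAt f f' x) (hg : HasGradientAt g g' x) :
    HasGradientAt (f + g) (f' + g') x := by
  rw [hasGradientAt_iff_hasFDerivAt, map_add]
  exact hf.hasFDerivAt.add hg.hasFDerivAt

theorem HasGradientAt.const_smul (c : 𝕜) (hf : HasGradientAt f f' x) :
    HasGradientAt (c • f) (starRingEnd 𝕜 c • f') x := by
  rw [hasGradientAt_iff_hasFDerivAt, LinearIsometryEquiv.map_smulₛₗ, RCLike.conj_conj]
  exact hf.hasFDerivAt.const_smul c

end Gradient

section RepresentingFunctional

variable {𝕜 G E : Type*} [RCLike 𝕜] [AddCommGroup G] [Module 𝕜 G]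

theorem LinearMap.exists_strongDual_comp_eq_of_norm_le_mul_norm
    [NormedAddCommGroup E] [NormedSpace 𝕜 E] (A : G →ₗ[𝕜] E) (B : G →ₗ[𝕜] 𝕜) {C : ℝ}
    (hC : 0 ≤ C) (hB : ∀ g, ‖B g‖ ≤ C * ‖A g‖) :
    ∃ ℓ : StrongDual 𝕜 E, ‖ℓ‖ ≤ C ∧ ∀ g, ℓ (A g) = B g := by
  have hker : LinearMap.ker A ≤ LinearMap.ker B := fun g hg => by
    simpa [LinearMap.mem_ker.mp hg] using hB g
  set ℓ₀ : LinearMap.range A →ₗ[𝕜] 𝕜 :=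
    (LinearMap.ker A).liftQ B hker ∘ₗ A.quotKerEquivRange.symm.toLinearMap
  have hℓ₀ : ∀ g, ℓ₀ ⟨A g, LinearMap.mem_range_self A g⟩ = B g := fun g => by
    simp [ℓ₀]
  have hbound : ∀ y, ‖ℓ₀ y‖ ≤ C * ‖y‖ := by
    rintro ⟨_, g, rfl⟩
    rw [hℓ₀, Submodule.coe_norm]
    exact hB g
  obtain ⟨ℓ, hext, hnorm⟩ := exists_extension_norm_eq _ (ℓ₀.mkContinuous C hbound)
  refine ⟨ℓ, hnorm ▸ LinearMap.mkContinuous_norm_le ℓ₀ hC hbound, fun g => ?_⟩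
  rw [← hℓ₀]
  exact hext ⟨A g, LinearMap.mem_range_self A g⟩

theorem LinearMap.exists_inner_eq_of_norm_le_mul_norm
    [NormedAddCommGroup E] [InnerProductSpace 𝕜 E] [CompleteSpace E]
    (A : G →ₗ[𝕜] E) (B : G →ₗ[𝕜] 𝕜) {C : ℝ}
    (hC : 0 ≤ C) (hB : ∀ g, ‖B g‖ ≤ C * ‖A g‖) :
    ∃ v : E, ‖v‖ ≤ C ∧ ∀ g, B g = inner 𝕜 v (A g) := by
  obtain ⟨ℓ, hℓ, hℓA⟩ := A.exists_strongDual_comp_eq_of_norm_le_mul_norm B hC hB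
  refine ⟨(InnerProductSpace.toDual 𝕜 E).symm ℓ, by simpa using hℓ, fun g => ?_⟩
  rw [InnerProductSpace.toDual_symm_apply, hℓA]

end RepresentingFunctional

section L2

variable {α : Type*} [MeasurableSpace α] {μ : Measure α}

theorem MeasureTheory.Lp.norm_two_eq_sqrt_integral_sq (f : Lp ℝ 2 μ) :
    ‖f‖ = Real.sqrt (∫ x, f x ^ 2 ∂μ) := by
  rw [norm_eq_sqrt_real_inner, L2.inner_def]
  simp only [RCLike.inner_apply, conj_trivial, sq]

theorem MeasureTheory.MemLp.norm_toLp_two_eq_sqrt_integral_sq {f : α → ℝ} (hf : MemLp f 2 μ) :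
    ‖hf.toLp f‖ = Real.sqrt (∫ x, f x ^ 2 ∂μ) := by
  rw [Lp.norm_two_eq_sqrt_integral_sq]
  congr 1
  exact integral_congr_ae (hf.coeFn_toLp.mono fun x hx => by simp only [hx])

theorem MeasureTheory.MemLp.inner_toLp_two_eq_integral_mul (g : Lp ℝ 2 μ) {f : α → ℝ}
    (hf : MemLp f 2 μ) : ⟪g, hf.toLp f⟫ = ∫ x, f x * g x ∂μ := by
  rw [L2.inner_def]
  refine integral_congr_ae (hf.coeFn_toLp.mono fun x hx => ?_)
  simp only [RCLike.inner_apply, conj_trivial, hx]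

end L2

namespace IsC1b

variable {H : Type*} [NormedAddCommGroup H] [InnerProductSpace ℝ H] [CompleteSpace H]
  {φ φ₁ φ₂ : H → ℝ} {D D₁ D₂ : H → H}

theorem zero : IsC1b (0 : H → ℝ) (0 : H → H) :=
  ⟨⟨0, fun _ => by simp⟩, fun x => hasGradientAt_const x 0, continuous_const,
    ⟨0, fun _ => by simp⟩⟩

theorem add (h₁ : IsC1b φ₁ D₁) (h₂ : IsC1b φ₂ D₂) : IsC1b (φ₁ + φ₂) (D₁ + D₂) := by
  obtain ⟨⟨M₁, hM₁⟩, hg₁, hc₁, ⟨N₁, hN₁⟩⟩ := h₁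
  obtain ⟨⟨M₂, hM₂⟩, hg₂, hc₂, ⟨N₂, hN₂⟩⟩ := h₂
  refine ⟨⟨M₁ + M₂, fun x => ?_⟩, fun x => ?_, hc₁.add hc₂, ⟨N₁ + N₂, fun x => ?_⟩⟩
  · exact (abs_add_le _ _).trans (add_le_add (hM₁ x) (hM₂ x))
  · exact (hg₁ x).add (hg₂ x)
  · exact (norm_add_le _ _).trans (add_le_add (hN₁ x) (hN₂ x))

theorem const_smul (c : ℝ) (h : IsC1b φ D) : IsC1b (c • φ) (c • D) := by
  obtain ⟨⟨M, hM⟩, hg, hc, ⟨N, hN⟩⟩ := h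
  refine ⟨⟨|c| * M, fun x => ?_⟩, fun x => ?_, hc.const_smul c, ⟨|c| * N, fun x => ?_⟩⟩
  · rw [Pi.smul_apply, smul_eq_mul, abs_mul]
    exact mul_le_mul_of_nonneg_left (hM x) (abs_nonneg c)
  · simpa only [Pi.smul_apply, conj_trivial] using (hg x).const_smul c
  · rw [Pi.smul_apply, norm_smul, Real.norm_eq_abs]
    exact mul_le_mul_of_nonneg_left (hN x) (abs_nonneg c)

theorem continuous (h : IsC1b φ D) : Continuous φ :=
  continuous_iff_continuousAt.2 fun x => (h.2.1 x).continuousAt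

variable [MeasurableSpace H] [BorelSpace H] (ν : Measure H) [IsFiniteMeasure ν]

theorem memLp (h : IsC1b φ D) (p : ENNReal) : MemLp φ p ν := by
  obtain ⟨M, hM⟩ := h.1
  exact MemLp.of_bound h.continuous.aestronglyMeasurable M (.of_forall hM)

theorem integrable_inner (h : IsC1b φ D) (v : H) : Integrable (fun x => ⟪D x, v⟫) ν := by
  obtain ⟨N, hN⟩ := h.2.2.2
  refine Integrable.of_bound (h.2.2.1.inner continuous_const).aestronglyMeasurable (N * ‖v‖)
    (.of_forall fun x => ?_)
  exact (norm_inner_le_norm _ _).trans (mul_le_mul_of_nonneg_right (hN x) (norm_nonneg v))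

end IsC1b

section C1bPairs

variable (H : Type*) [NormedAddCommGroup H] [InnerProductSpace ℝ H] [CompleteSpace H]

def c1bPairs : Submodule ℝ ((H → ℝ) × (H → H)) where
  carrier := {p | IsC1b p.1 p.2}
  zero_mem' := IsC1b.zero
  add_mem' := IsC1b.add
  smul_mem' c _ hp := hp.const_smul c

variable {H} [MeasurableSpace H] [BorelSpace H] (ν : Measure H) [IsFiniteMeasure ν]

@[simps]
noncomputable def c1bPairs.toL2 : c1bPairs H →ₗ[ℝ] Lp ℝ 2 ν where
  toFun p := (p.2.memLp ν 2).toLp p.1.1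
  map_add' _ _ := MemLp.toLp_add _ _
  map_smul' c _ := MemLp.toLp_const_smul c _

@[simps]
noncomputable def c1bPairs.integralInnerGradient (h : H) : c1bPairs H →ₗ[ℝ] ℝ where
  toFun p := ∫ x, ⟪p.1.2 x, h⟫ ∂ν
  map_add' p q := by
    simp only [Submodule.coe_add, Prod.snd_add, Pi.add_apply, inner_add_left]
    exact integral_add (p.2.integrable_inner ν h) (q.2.integrable_inner ν h)
  map_smul' c p := by
    simp only [Submodule.coe_smul, Prod.smul_snd, Pi.smul_apply, real_inner_smul_left]
    exact integral_const_mul c _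

end C1bPairs

theorem fomin_integration_by_parts_general
    {H : Type*} [NormedAddCommGroup H] [InnerProductSpace ℝ H] [CompleteSpace H]
    [MeasurableSpace H] [BorelSpace H]
    (ν : Measure H) [IsProbabilityMeasure ν] (h : H) (C : ℝ) (hC : 0 ≤ C)
    (hbound : ∀ (φ : H → ℝ) (Dφ : H → H), IsC1b φ Dφ →
      |∫ x, ⟪Dφ x, h⟫ ∂ν| ≤ C * Real.sqrt (∫ x, φ x ^ 2 ∂ν)) :
    ∃ v : H → ℝ, MemLp v 2 ν ∧ Real.sqrt (∫ x, v x ^ 2 ∂ν) ≤ C ∧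
      ∀ (φ : H → ℝ) (Dφ : H → H), IsC1b φ Dφ →
        ∫ x, ⟪Dφ x, h⟫ ∂ν = ∫ x, φ x * v x ∂ν := by
  obtain ⟨v, hv, hrepr⟩ := (c1bPairs.toL2 ν).exists_inner_eq_of_norm_le_mul_norm
    (c1bPairs.integralInnerGradient ν h) hC fun p => by
      rw [Real.norm_eq_abs, c1bPairs.integralInnerGradient_apply, c1bPairs.toL2_apply,
        MemLp.norm_toLp_two_eq_sqrt_integral_sq]
      exact hbound _ _ p.2
  refine ⟨v, Lp.memLp v, Lp.norm_two_eq_sqrt_integral_sq v ▸ hv, fun φ Dφ hφ => ?_⟩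
  rw [← MemLp.inner_toLp_two_eq_integral_mul v (hφ.memLp ν 2)]
  exact hrepr ⟨(φ, Dφ), hφ⟩

/-- **Abstract form of Proposition 2.3 of the paper: existence of the
logarithmic derivative / integration by parts density.** If
`|∫ ⟨Dφ, h⟩ dν| ≤ C ‖φ‖_{L²(ν)}` for all `φ ∈ C¹_b(H)`, then there exists
`v ∈ L²(H,ν)` with `‖v‖_{L²(ν)} ≤ C` such that
`∫ ⟨Dφ(x), h⟩ ν(dx) = ∫ φ(x) v(x) ν(dx)` for all `φ ∈ C¹_b(H)`. -/
theorem fomin_integration_by_parts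
    {H : Type*} [NormedAddCommGroup H] [InnerProductSpace ℝ H] [CompleteSpace H]
    [SecondCountableTopology H] [MeasurableSpace H] [BorelSpace H]
    (ν : Measure H) [IsProbabilityMeasure ν] (h : H) (C : ℝ) (hC : 0 ≤ C)
    (hbound : ∀ (φ : H → ℝ) (Dφ : H → H), IsC1b φ Dφ →
      |∫ x, ⟪Dφ x, h⟫ ∂ν| ≤ C * Real.sqrt (∫ x, φ x ^ 2 ∂ν)) :
    ∃ v : H → ℝ, MemLp v 2 ν ∧ Real.sqrt (∫ x, v x ^ 2 ∂ν) ≤ C ∧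
      ∀ (φ : H → ℝ) (Dφ : H → H), IsC1b φ Dφ →
        ∫ x, ⟪Dφ x, h⟫ ∂ν = ∫ x, φ x * v x ∂ν :=
  fomin_integration_by_parts_general ν h C hC hbound
end
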